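/- Under the same setup with φ continuously differentiable, concave and increasing, the function u ↦ G(t,u) is concave on [1,∞) for each fixed t ≥ 0; equivalently ∂²G/∂u²(t,u) ≤ 0. -/

import Mathlib

/-!
`G t` is the time-`t` map of the flow of `u' = φ u` (in the coordinate `Φ` it is translation by
`t`), so `∂G/∂u (t,u) = φ (G t u) / φ u`. Since `G t u ≥ u` and `φ'` is nonincreasing, the
derivative of this ratio, `φ (G t u) (φ' (G t u) - φ' u) / φ u ^ 2`, is nonpositive; hence `∂G/∂u`
is nonincreasing in `u` and `G t` is concave.
-/

open Set

section Primitive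

variable {f : ℝ → ℝ} {a : ℝ}

theorem continuousOn_primitive_Ici (hf : ContinuousOn f (Ici a)) :
    ContinuousOn (fun s => ∫ x in a..s, f x) (Ici a) := by
  intro s hs
  have hs1 : a ≤ s + 1 := by linarith [mem_Ici.1 hs]
  have hIcc : ContinuousOn (fun s => ∫ x in a..s, f x) (Icc a (s + 1)) := by
    rw [← uIcc_of_le hs1]
    exact intervalIntegral.continuousOn_primitive_interval
      ((hf.mono Icc_subset_Ici_self).integrableOn_Icc.mono_set (uIcc_of_le hs1).subset)
  refine (hIcc s ⟨hs, by linarith⟩).mono_of_mem_nhdsWithin ?_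
  rw [← Ici_inter_Iic]
  exact inter_mem_nhdsWithin _ (Iic_mem_nhds (lt_add_one s))

theorem hasDerivAt_primitive_of_continuousOn_Ici (hf : ContinuousOn f (Ici a)) {s : ℝ}
    (hs : a < s) : HasDerivAt (fun s => ∫ x in a..s, f x) (f s) s :=
  intervalIntegral.integral_hasDerivAt_right
    ((hf.mono (uIcc_of_le hs.le ▸ Icc_subset_Ici_self)).intervalIntegrable)
    ((hf.mono Ioi_subset_Ici_self).stronglyMeasurableAtFilter isOpen_Ioi s hs)
    (hf.continuousAt (Ici_mem_nhds hs))

theorem strictMonoOn_primitive_Ici (hf : ContinuousOn f (Ici a)) (hpos : ∀ x > a, 0 < f x) :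
    StrictMonoOn (fun s => ∫ x in a..s, f x) (Ici a) :=
  strictMonoOn_of_deriv_pos (convex_Ici a) (continuousOn_primitive_Ici hf) fun x hx => by
    rw [interior_Ici] at hx
    rw [(hasDerivAt_primitive_of_continuousOn_Ici hf hx).deriv]
    exact hpos x hx

end Primitive

section Inverse

variable {φ Φ Ψ : ℝ → ℝ}

theorem monotoneOn_of_inverse_of_strictMonoOn (hΦ : StrictMonoOn Φ (Ici 1))
    (hΨmem : ∀ v ≥ (0:ℝ), 1 ≤ Ψ v) (hΦΨ : ∀ v ≥ (0:ℝ), Φ (Ψ v) = v) :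
    MonotoneOn Ψ (Ici 0) := fun v hv w hw hvw =>
  (hΦ.le_iff_le (hΨmem v hv) (hΨmem w hw)).1 (by rwa [hΦΨ v hv, hΦΨ w hw])

theorem one_lt_of_inverse (hΦ1 : Φ 1 = 0) (hΨmem : ∀ v ≥ (0:ℝ), 1 ≤ Ψ v)
    (hΦΨ : ∀ v ≥ (0:ℝ), Φ (Ψ v) = v) {v : ℝ} (hv : 0 < v) : 1 < Ψ v := by
  refine (hΨmem v hv.le).lt_of_ne fun h => hv.ne' ?_
  rw [← hΦΨ v hv.le, ← h, hΦ1]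

theorem image_Ici_zero_of_inverse (hΦ0 : ∀ s ≥ (1:ℝ), 0 ≤ Φ s) (hΨmem : ∀ v ≥ (0:ℝ), 1 ≤ Ψ v)
    (hΨΦ : ∀ s ≥ (1:ℝ), Ψ (Φ s) = s) : Ψ '' Ici 0 = Ici 1 :=
  Subset.antisymm (image_subset_iff.2 hΨmem) fun s hs => ⟨Φ s, hΦ0 s hs, hΨΦ s hs⟩

theorem continuousOn_Ici_zero_of_inverse (hΦ : StrictMonoOn Φ (Ici 1)) (hΦ1 : Φ 1 = 0)
    (hΨmem : ∀ v ≥ (0:ℝ), 1 ≤ Ψ v) (hΨΦ : ∀ s ≥ (1:ℝ), Ψ (Φ s) = s)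
    (hΦΨ : ∀ v ≥ (0:ℝ), Φ (Ψ v) = v) : ContinuousOn Ψ (Ici 0) := by
  have hmono := monotoneOn_of_inverse_of_strictMonoOn hΦ hΨmem hΦΨ
  have himage : Ψ '' Ici 0 = Ici 1 := image_Ici_zero_of_inverse
    (fun s hs => hΦ1 ▸ hΦ.monotoneOn self_mem_Ici hs hs) hΨmem hΨΦ
  intro v hv
  rcases (mem_Ici.1 hv).eq_or_lt with rfl | hv
  · have hΨ0 : Ψ 0 = 1 := by rw [← hΦ1, hΨΦ 1 le_rfl]
    refine continuousWithinAt_right_of_monotoneOn_of_image_mem_nhdsWithin hmono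
      self_mem_nhdsWithin ?_
    rw [himage, hΨ0]
    exact self_mem_nhdsWithin
  · refine (continuousAt_of_monotoneOn_of_image_mem_nhds hmono (Ici_mem_nhds hv) ?_)
      |>.continuousWithinAt
    rw [himage]
    exact Ici_mem_nhds (one_lt_of_inverse hΦ1 hΨmem hΦΨ hv)

theorem hasDerivAt_of_inverse (hpos : ∀ u ≥ (1:ℝ), 0 < φ u)
    (hΦd : ∀ s > (1:ℝ), HasDerivAt Φ (1 / φ s) s) (hΨcont : ContinuousOn Ψ (Ici 0))
    (hΦ1 : Φ 1 = 0) (hΨmem : ∀ v ≥ (0:ℝ), 1 ≤ Ψ v) (hΦΨ : ∀ v ≥ (0:ℝ), Φ (Ψ v) = v) {v : ℝ}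
    (hv : 0 < v) : HasDerivAt Ψ (φ (Ψ v)) v := by
  have h1 := one_lt_of_inverse hΦ1 hΨmem hΦΨ hv
  simpa only [one_div, inv_inv] using (hΦd _ h1).of_local_left_inverse
    (hΨcont.continuousAt (Ici_mem_nhds hv)) (one_div_ne_zero (hpos _ h1.le).ne')
    ((eventually_ge_nhds hv).mono hΦΨ)

theorem le_inverse_add (hΨmono : MonotoneOn Ψ (Ici 0)) (hΦ0 : ∀ s ≥ (1:ℝ), 0 ≤ Φ s)
    (hΨΦ : ∀ s ≥ (1:ℝ), Ψ (Φ s) = s) {t u : ℝ} (ht : 0 ≤ t) (hu : 1 ≤ u) :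
    u ≤ Ψ (Φ u + t) :=
  calc u = Ψ (Φ u) := (hΨΦ u hu).symm
    _ ≤ Ψ (Φ u + t) :=
      hΨmono (hΦ0 u hu) (add_nonneg (hΦ0 u hu) ht) (le_add_of_nonneg_right ht)

end Inverse

theorem antitoneOn_comp_div_of_hasDerivAt {φ φ' g : ℝ → ℝ} {a : ℝ} (hpos : ∀ u ≥ a, 0 < φ u)
    (hφd : ∀ u ≥ a, HasDerivAt φ (φ' u) u) (hφ'anti : AntitoneOn φ' (Ici a))
    (hgd : ∀ u > a, HasDerivAt g (φ (g u) / φ u) u) (hle : ∀ u > a, u ≤ g u) :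
    AntitoneOn (fun u => φ (g u) / φ u) (Ioi a) := by
  have hd : ∀ u > a, HasDerivAt (fun x => φ (g x) / φ x)
      (φ (g u) * (φ' (g u) - φ' u) / φ u ^ 2) u := by
    intro u hu
    have hφu := (hpos u hu.le).ne'
    have hnum : HasDerivAt (fun x => φ (g x)) (φ' (g u) * (φ (g u) / φ u)) u :=
      (hφd (g u) (hu.le.trans (hle u hu))).comp u (hgd u hu)
    refine (hnum.fun_div (hφd u hu.le) hφu).congr_deriv ?_
    rw [mul_div_assoc', div_mul_cancel₀ _ hφu]
    ring
  refine antitoneOn_of_deriv_nonpos (convex_Ioi a)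
    (fun u hu => (hd u hu).continuousAt.continuousWithinAt) ?_ fun u hu => ?_ <;>
    rw [interior_Ioi] at *
  · exact fun u hu => (hd u hu).differentiableAt.differentiableWithinAt
  · have hgu : a ≤ g u := hu.le.trans (hle u hu)
    rw [(hd u hu).deriv]
    exact div_nonpos_of_nonpos_of_nonneg (mul_nonpos_of_nonneg_of_nonpos (hpos _ hgu).le
      (sub_nonpos.2 (hφ'anti (mem_Ici.2 hu.le) hgu (hle u hu)))) (sq_nonneg _)

theorem concaveOn_Ici_of_hasDerivAt {g g' : ℝ → ℝ} {a : ℝ} (hg : ContinuousOn g (Ici a))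
    (hgd : ∀ u > a, HasDerivAt g (g' u) u) (hg' : AntitoneOn g' (Ioi a)) :
    ConcaveOn ℝ (Ici a) g := by
  refine AntitoneOn.concaveOn_of_deriv (convex_Ici a) hg ?_ ?_ <;> rw [interior_Ici]
  · exact fun u hu => (hgd u hu).differentiableAt.differentiableWithinAt
  · exact hg'.congr fun u hu => ((hgd u hu).deriv).symm

theorem stmt6_general (φ φ' Φ Ψ : ℝ → ℝ) (G : ℝ → ℝ → ℝ)
    (hpos : ∀ u ≥ (1:ℝ), 0 < φ u)
    (hφd : ∀ s ≥ (1:ℝ), HasDerivAt φ (φ' s) s)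
    (hφ'anti : AntitoneOn φ' (Set.Ici 1))
    (hΦ : ∀ s, Φ s = ∫ u in (1:ℝ)..s, 1 / φ u)
    (hΨmem : ∀ v ≥ (0:ℝ), 1 ≤ Ψ v)
    (hΨΦ : ∀ s ≥ (1:ℝ), Ψ (Φ s) = s)
    (hΦΨ : ∀ v ≥ (0:ℝ), Φ (Ψ v) = v)
    (hG : ∀ t u, G t u = Ψ (Φ u + t)) :
    ∀ t ≥ (0:ℝ), ConcaveOn ℝ (Set.Ici 1) (fun u => G t u) := by
  intro t ht
  have hf : ContinuousOn (fun u => 1 / φ u) (Ici 1) :=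
    continuousOn_const.div (fun s hs => (hφd s hs).continuousAt.continuousWithinAt)
      fun s hs => (hpos s hs).ne'
  have hΦeq : Φ = fun s => ∫ u in (1:ℝ)..s, 1 / φ u := funext hΦ
  have hΦcont : ContinuousOn Φ (Ici 1) := hΦeq ▸ continuousOn_primitive_Ici hf
  have hΦd : ∀ s > (1:ℝ), HasDerivAt Φ (1 / φ s) s := fun s hs =>
    hΦeq ▸ hasDerivAt_primitive_of_continuousOn_Ici hf hs
  have hΦmono : StrictMonoOn Φ (Ici 1) :=
    hΦeq ▸ strictMonoOn_primitive_Ici hf fun x hx => one_div_pos.2 (hpos x hx.le)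
  have hΦ1 : Φ 1 = 0 := by rw [hΦ, intervalIntegral.integral_same]
  have hΦpos : ∀ s > (1:ℝ), 0 < Φ s := fun s hs => hΦ1 ▸ hΦmono self_mem_Ici hs.le hs
  have hΦ0 : ∀ s ≥ (1:ℝ), 0 ≤ Φ s := fun s hs => hΦ1 ▸ hΦmono.monotoneOn self_mem_Ici hs hs
  have hΨcont := continuousOn_Ici_zero_of_inverse hΦmono hΦ1 hΨmem hΨΦ hΦΨ
  have hΨmono := monotoneOn_of_inverse_of_strictMonoOn hΦmono hΨmem hΦΨ
  have hgd : ∀ u > (1:ℝ), HasDerivAt (fun u => Ψ (Φ u + t)) (φ (Ψ (Φ u + t)) / φ u) u :=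
    fun u hu => ((hasDerivAt_of_inverse hpos hΦd hΨcont hΦ1 hΨmem hΦΨ
      (add_pos_of_pos_of_nonneg (hΦpos u hu) ht)).comp u ((hΦd u hu).add_const t)).congr_deriv
      (mul_one_div _ _)
  simp only [hG]
  exact concaveOn_Ici_of_hasDerivAt
    (hΨcont.comp (hΦcont.add continuousOn_const)
      fun u hu => add_nonneg (hΦ0 u hu) ht) hgd
    (antitoneOn_comp_div_of_hasDerivAt hpos hφd hφ'anti hgd
      fun u hu => le_inverse_add hΨmono hΦ0 hΨΦ ht hu.le)

/-- If `φ` is C¹, increasing and concave, then `u ↦ G(t,u)` is concave on `[1,∞)`. -/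
theorem stmt6 (φ φ' Φ Ψ : ℝ → ℝ) (G : ℝ → ℝ → ℝ)
    (hpos : ∀ u ≥ (1:ℝ), 0 < φ u)
    (hφd : ∀ s ≥ (1:ℝ), HasDerivAt φ (φ' s) s)
    (hφ'cont : ContinuousOn φ' (Set.Ici 1))
    (hφ'nonneg : ∀ s ≥ (1:ℝ), 0 ≤ φ' s)
    (hφ'anti : AntitoneOn φ' (Set.Ici 1))
    (hΦ : ∀ s, Φ s = ∫ u in (1:ℝ)..s, 1 / φ u)
    (hPhiTop : ∀ M : ℝ, ∃ s ≥ (1:ℝ), M < Φ s)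
    (hΨmem : ∀ v ≥ (0:ℝ), 1 ≤ Ψ v)
    (hΨΦ : ∀ s ≥ (1:ℝ), Ψ (Φ s) = s)
    (hΦΨ : ∀ v ≥ (0:ℝ), Φ (Ψ v) = v)
    (hG : ∀ t u, G t u = Ψ (Φ u + t)) :
    ∀ t ≥ (0:ℝ), ConcaveOn ℝ (Set.Ici 1) (fun u => G t u) :=
  stmt6_general φ φ' Φ Ψ G hpos hφd hφ'anti hΦ hΨmem hΨΦ hΦΨ hG
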